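/- Let V be a finite-dimensional complex Hilbert space, T ∈ B(V ⊗ F) symmetric with respect to a set of symmetries S each of the form S₁ ⊗ S₂ with S₂ leaving the vacuum Ω invariant, such that S₁ := {S₁ : S₁⊗S₂ ∈ S} acts irreducibly on V. Then the vacuum expectation ⟨T⟩_Ω is a multiple of the identity: ⟨T⟩_Ω = c·1_V for some c ∈ ℂ. -/

import Mathlib

/-! Since `S₂ Ω = Ω`, the relation `S T S* = T` (resp. `T*`) passes to the vacuum expectation:
`S₁ M S₁* = M` (resp. `M*`) for `M = ⟨T⟩_Ω`. Either way `S₁` then commutes with both self-adjoint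
parts `ℜ M` and `ℑ M`. An eigenspace of a self-adjoint operator belongs to a real eigenvalue, so
it is preserved by every unitary or antiunitary map commuting with the operator; irreducibility
makes it all of `V`. Hence `ℜ M`, `ℑ M` and `M = ℜ M + i ℑ M` are scalars. -/

open scoped ComplexConjugate

/-- The Hilbert sum `⊕_{i<d} F ≅ ℂ^d ⊗ F` is complete when `F` is. -/
instance piLpCompleteSpace {F : Type*} [NormedAddCommGroup F] [CompleteSpace F] (d : ℕ) :
    CompleteSpace (PiLp 2 fun _ : Fin d => F) :=
  inferInstance

/-- A unitary map on a complex inner product space, given as a plain function. -/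
def IsUnitaryMap {V : Type*} [NormedAddCommGroup V] [InnerProductSpace ℂ V]
    (S : V → V) : Prop :=
  Function.Bijective S ∧ (∀ x y : V, S (x + y) = S x + S y) ∧
    (∀ (a : ℂ) (x : V), S (a • x) = a • S x) ∧
    ∀ x y : V, (inner ℂ (S x) (S y) : ℂ) = inner ℂ x y

/-- An antiunitary map on a complex inner product space. -/
def IsAntiunitaryMap {V : Type*} [NormedAddCommGroup V] [InnerProductSpace ℂ V]
    (S : V → V) : Prop :=
  Function.Bijective S ∧ (∀ x y : V, S (x + y) = S x + S y) ∧
    (∀ (a : ℂ) (x : V), S (a • x) = conj a • S x) ∧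
    ∀ x y : V, (inner ℂ (S x) (S y) : ℂ) = conj (inner ℂ x y : ℂ)

/-- The embedding `v ↦ v ⊗ Ω` of `ℂ^d` into `ℂ^d ⊗ F ≅ F ⊕ … ⊕ F`. -/
noncomputable def tensorVacuum {F : Type*} [NormedAddCommGroup F] [InnerProductSpace ℂ F]
    (d : ℕ) (Ω : F) (v : EuclideanSpace ℂ (Fin d)) : PiLp 2 (fun _ : Fin d => F) :=
  WithLp.toLp 2 (fun i => v i • Ω)

open scoped InnerProductSpace ComplexStarModule

section Symmetry

variable {V : Type*} [NormedAddCommGroup V] [InnerProductSpace ℂ V] {S : V → V}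

theorem IsUnitaryMap.map_ofReal_smul (hS : IsUnitaryMap S) (r : ℝ) (v : V) :
    S ((r : ℂ) • v) = (r : ℂ) • S v :=
  hS.2.2.1 r v

theorem IsAntiunitaryMap.map_ofReal_smul (hS : IsAntiunitaryMap S) (r : ℝ) (v : V) :
    S ((r : ℂ) • v) = (r : ℂ) • S v := by
  rw [hS.2.2.1, Complex.conj_ofReal]

def IsUnitaryMap.toLinearMap (hS : IsUnitaryMap S) : V →ₗ[ℂ] V where
  toFun := S
  map_add' := hS.2.1
  map_smul' := hS.2.2.1

theorem IsUnitaryMap.coe_toLinearMap (hS : IsUnitaryMap S) : ⇑hS.toLinearMap = S := rfl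

def IsAntiunitaryMap.toLinearMap (hS : IsAntiunitaryMap S) : V →ₗ⋆[ℂ] V where
  toFun := S
  map_add' := hS.2.1
  map_smul' := hS.2.2.1

theorem IsAntiunitaryMap.coe_toLinearMap (hS : IsAntiunitaryMap S) : ⇑hS.toLinearMap = S := rfl

theorem IsUnitaryMap.semiconj_of_inner (hS : IsUnitaryMap S) {A B : V → V}
    (h : ∀ x y, ⟪S x, A (S y)⟫_ℂ = ⟪x, B y⟫_ℂ) : Function.Semiconj S B A := by
  intro y
  refine ext_inner_left ℂ fun w => ?_
  obtain ⟨x, rfl⟩ := hS.1.2 w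
  rw [hS.2.2.2, h]

theorem IsAntiunitaryMap.semiconj_of_inner (hS : IsAntiunitaryMap S) {A B : V → V}
    (h : ∀ x y, ⟪S x, A (S y)⟫_ℂ = ⟪B y, x⟫_ℂ) : Function.Semiconj S B A := by
  intro y
  refine ext_inner_left ℂ fun w => ?_
  obtain ⟨x, rfl⟩ := hS.1.2 w
  rw [hS.2.2.2, h, inner_conj_symm]

variable [CompleteSpace V] {A B : V →L[ℂ] V}

theorem IsUnitaryMap.semiconj_adjoint (hS : IsUnitaryMap S) (h : Function.Semiconj S B A) :
    Function.Semiconj S (ContinuousLinearMap.adjoint B) (ContinuousLinearMap.adjoint A) :=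
  hS.semiconj_of_inner fun x y => by
    rw [ContinuousLinearMap.adjoint_inner_right, ← h, hS.2.2.2,
      ContinuousLinearMap.adjoint_inner_right]

theorem IsAntiunitaryMap.semiconj_adjoint (hS : IsAntiunitaryMap S)
    (h : Function.Semiconj S B A) :
    Function.Semiconj S (ContinuousLinearMap.adjoint B) (ContinuousLinearMap.adjoint A) :=
  hS.semiconj_of_inner fun x y => by
    rw [ContinuousLinearMap.adjoint_inner_right, ← h, hS.2.2.2, inner_conj_symm,
      ContinuousLinearMap.adjoint_inner_left]

theorem ContinuousLinearMap.realPart_apply (A : V →L[ℂ] V) (v : V) :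
    (ℜ A : V →L[ℂ] V) v = (2 : ℝ)⁻¹ • (A v + ContinuousLinearMap.adjoint A v) := by
  rw [realPart_apply_coe]; rfl

theorem ContinuousLinearMap.imaginaryPart_apply (A : V →L[ℂ] V) (v : V) :
    (ℑ A : V →L[ℂ] V) v = -Complex.I • (2 : ℝ)⁻¹ • (A v - ContinuousLinearMap.adjoint A v) := by
  rw [imaginaryPart_apply_coe]; rfl

theorem IsUnitaryMap.commute_realPart (hS : IsUnitaryMap S) (h : Function.Commute S A) :
    Function.Commute S (ℜ A : V →L[ℂ] V) := by
  intro v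
  rw [A.realPart_apply, A.realPart_apply, ← h v, ← hS.semiconj_adjoint h v, ← hS.coe_toLinearMap]
  simp [LinearMap.map_smul_of_tower]

theorem IsUnitaryMap.commute_imaginaryPart (hS : IsUnitaryMap S) (h : Function.Commute S A) :
    Function.Commute S (ℑ A : V →L[ℂ] V) := by
  intro v
  rw [A.imaginaryPart_apply, A.imaginaryPart_apply, ← h v, ← hS.semiconj_adjoint h v,
    ← hS.coe_toLinearMap]
  simp [LinearMap.map_smul_of_tower]

theorem IsAntiunitaryMap.commute_realPart (hS : IsAntiunitaryMap S)
    (h : Function.Semiconj S (ContinuousLinearMap.adjoint A) A) :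
    Function.Commute S (ℜ A : V →L[ℂ] V) := by
  intro v
  have h' := hS.semiconj_adjoint h
  rw [ContinuousLinearMap.adjoint_adjoint] at h'
  rw [A.realPart_apply, A.realPart_apply, ← h v, ← h' v, ← hS.coe_toLinearMap]
  simp [← Complex.coe_smul, map_ofNat, add_comm]

theorem IsAntiunitaryMap.commute_imaginaryPart (hS : IsAntiunitaryMap S)
    (h : Function.Semiconj S (ContinuousLinearMap.adjoint A) A) :
    Function.Commute S (ℑ A : V →L[ℂ] V) := by
  intro v
  have h' := hS.semiconj_adjoint h
  rw [ContinuousLinearMap.adjoint_adjoint] at h'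
  rw [A.imaginaryPart_apply, A.imaginaryPart_apply, ← h v, ← h' v, ← hS.coe_toLinearMap]
  simp [← Complex.coe_smul, map_ofNat]
  module

end Symmetry

theorem exists_eq_smul_id_of_isSelfAdjoint_of_commute {E : Type*} [NormedAddCommGroup E]
    [InnerProductSpace ℂ E] [FiniteDimensional ℂ E] {ι : Type*} (S : ι → E → E)
    (hirr : ∀ W : Submodule ℂ E, (∀ i, ∀ v ∈ W, S i v ∈ W) → W = ⊥ ∨ W = ⊤)
    (hreal : ∀ i (r : ℝ) (v : E), S i ((r : ℂ) • v) = (r : ℂ) • S i v)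
    {H : E →L[ℂ] E} (hH : IsSelfAdjoint H) (hcomm : ∀ i, Function.Commute (S i) H) :
    ∃ c : ℂ, H = c • ContinuousLinearMap.id ℂ E := by
  cases subsingleton_or_nontrivial E
  · exact ⟨0, Subsingleton.elim _ _⟩
  obtain ⟨μ, hμ⟩ := Module.End.exists_eigenvalue (H : E →ₗ[ℂ] E)
  have hμ_real : ((μ.re : ℝ) : ℂ) = μ :=
    Complex.conj_eq_iff_re.1 (hH.isSymmetric.conj_eigenvalue_eq_self hμ)
  have hinv : ∀ i, ∀ v ∈ Module.End.eigenspace (H : E →ₗ[ℂ] E) μ,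
      S i v ∈ Module.End.eigenspace (H : E →ₗ[ℂ] E) μ := by
    intro i v hv
    rw [Module.End.mem_eigenspace_iff, ← hμ_real] at hv ⊢
    exact (hcomm i v).symm.trans ((congrArg (S i) hv).trans (hreal i _ v))
  rcases hirr _ hinv with hbot | htop
  · exact absurd hbot hμ
  · exact ⟨μ, ContinuousLinearMap.ext fun v =>
      Module.End.mem_eigenspace_iff.1 (htop ▸ Submodule.mem_top)⟩

section Compression

variable {V W : Type*} [NormedAddCommGroup V] [InnerProductSpace ℂ V] [NormedAddCommGroup W]
  [InnerProductSpace ℂ W] {e : V → W} {T : W →L[ℂ] W} {M : V →L[ℂ] V} {S₁ : V → V} {S₂ : W → W}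

theorem IsUnitaryMap.commute_compression (h₁ : IsUnitaryMap S₁) (h₂ : IsUnitaryMap S₂)
    (hM : ∀ x y, ⟪x, M y⟫_ℂ = ⟪e x, T (e y)⟫_ℂ) (he : ∀ v, S₂ (e v) = e (S₁ v))
    (hT : Function.Commute S₂ T) : Function.Commute S₁ M :=
  h₁.semiconj_of_inner fun x y => by rw [hM, hM, ← he, ← he, ← hT, h₂.2.2.2]

theorem IsAntiunitaryMap.semiconj_adjoint_compression [CompleteSpace V] [CompleteSpace W]
    (h₁ : IsAntiunitaryMap S₁) (h₂ : IsAntiunitaryMap S₂)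
    (hM : ∀ x y, ⟪x, M y⟫_ℂ = ⟪e x, T (e y)⟫_ℂ) (he : ∀ v, S₂ (e v) = e (S₁ v))
    (hT : Function.Semiconj S₂ T (ContinuousLinearMap.adjoint T)) :
    Function.Semiconj S₁ (ContinuousLinearMap.adjoint M) M :=
  h₁.semiconj_of_inner fun x y => by
    rw [hM, ← he, ← he, ← ContinuousLinearMap.adjoint_inner_left, ← hT, h₂.2.2.2, inner_conj_symm,
      ContinuousLinearMap.adjoint_inner_left, hM]

end Compression

theorem vacuum_expectation_is_scalar_general {F : Type*} [NormedAddCommGroup F]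
    [InnerProductSpace ℂ F] [CompleteSpace F]
    (Ω : F) (d : ℕ)
    (T : PiLp 2 (fun _ : Fin d => F) →L[ℂ] PiLp 2 (fun _ : Fin d => F))
    (𝒮 : Set ((EuclideanSpace ℂ (Fin d) → EuclideanSpace ℂ (Fin d)) ×
      (PiLp 2 (fun _ : Fin d => F) → PiLp 2 (fun _ : Fin d => F))))
    (hsym : ∀ p ∈ 𝒮,
      (IsUnitaryMap p.1 ∧ IsUnitaryMap p.2 ∧
        ∀ x : PiLp 2 (fun _ : Fin d => F), p.2 (T x) = T (p.2 x)) ∨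
      (IsAntiunitaryMap p.1 ∧ IsAntiunitaryMap p.2 ∧
        ∀ x : PiLp 2 (fun _ : Fin d => F),
          p.2 (T x) = (ContinuousLinearMap.adjoint T) (p.2 x)))
    (hvac : ∀ p ∈ 𝒮, ∀ v : EuclideanSpace ℂ (Fin d),
      p.2 (tensorVacuum d Ω v) = tensorVacuum d Ω (p.1 v))
    (hirr : ∀ W : Submodule ℂ (EuclideanSpace ℂ (Fin d)),
      (∀ p ∈ 𝒮, ∀ v ∈ W, p.1 v ∈ W) → W = ⊥ ∨ W = ⊤)
    (M : EuclideanSpace ℂ (Fin d) →L[ℂ] EuclideanSpace ℂ (Fin d))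
    (hM : ∀ v₁ v₂ : EuclideanSpace ℂ (Fin d),
      (inner ℂ v₁ (M v₂) : ℂ) = inner ℂ (tensorVacuum d Ω v₁) (T (tensorVacuum d Ω v₂))) :
    ∃ c : ℂ, M = c • ContinuousLinearMap.id ℂ (EuclideanSpace ℂ (Fin d)) := by
  have hS₁ : ∀ p : 𝒮, (∀ (r : ℝ) v, p.1.1 ((r : ℂ) • v) = (r : ℂ) • p.1.1 v) ∧
      Function.Commute p.1.1 (ℜ M : _) ∧ Function.Commute p.1.1 (ℑ M : _) := by
    rintro ⟨p, hp⟩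
    rcases hsym p hp with ⟨h₁, h₂, hT⟩ | ⟨h₁, h₂, hT⟩
    · have hMS := h₁.commute_compression h₂ hM (hvac p hp) hT
      exact ⟨h₁.map_ofReal_smul, h₁.commute_realPart hMS, h₁.commute_imaginaryPart hMS⟩
    · have hMS := h₁.semiconj_adjoint_compression h₂ hM (hvac p hp) hT
      exact ⟨h₁.map_ofReal_smul, h₁.commute_realPart hMS, h₁.commute_imaginaryPart hMS⟩
  have hirr' : ∀ W, (∀ p : 𝒮, ∀ v ∈ W, p.1.1 v ∈ W) → W = ⊥ ∨ W = ⊤ :=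
    fun W hW => hirr W fun p hp => hW ⟨p, hp⟩
  obtain ⟨a, ha⟩ := exists_eq_smul_id_of_isSelfAdjoint_of_commute _ hirr'
    (fun p => (hS₁ p).1) selfAdjoint.isSelfAdjoint (fun p => (hS₁ p).2.1)
  obtain ⟨b, hb⟩ := exists_eq_smul_id_of_isSelfAdjoint_of_commute _ hirr'
    (fun p => (hS₁ p).1) selfAdjoint.isSelfAdjoint (fun p => (hS₁ p).2.2)
  refine ⟨a + Complex.I * b, ?_⟩
  rw [← realPart_add_I_smul_imaginaryPart M, ha, hb]
  module

/-- Let `T` be a bounded operator on `V ⊗ F` (`V = ℂ^d`) which is symmetric with respect to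
a set `𝒮` of symmetries of the form `S = S₁ ⊗ S₂` (both unitary or both antiunitary), with
`S₂ Ω = Ω` — so that `S (v ⊗ Ω) = (S₁ v) ⊗ Ω` — and `S T S* = T` (resp. `= T*`).  If the set
of first factors `S₁` acts irreducibly on `V`, then the vacuum expectation `⟨T⟩_Ω`,
characterized by `⟨v₁, ⟨T⟩_Ω v₂⟩ = ⟨v₁ ⊗ Ω, T (v₂ ⊗ Ω)⟩`, is a multiple of the identity. -/
theorem vacuum_expectation_is_scalar {F : Type*} [NormedAddCommGroup F]
    [InnerProductSpace ℂ F] [CompleteSpace F]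
    (Ω : F) (hΩ : ‖Ω‖ = 1) (d : ℕ)
    (T : PiLp 2 (fun _ : Fin d => F) →L[ℂ] PiLp 2 (fun _ : Fin d => F))
    (𝒮 : Set ((EuclideanSpace ℂ (Fin d) → EuclideanSpace ℂ (Fin d)) ×
      (PiLp 2 (fun _ : Fin d => F) → PiLp 2 (fun _ : Fin d => F))))
    (hsym : ∀ p ∈ 𝒮,
      (IsUnitaryMap p.1 ∧ IsUnitaryMap p.2 ∧
        ∀ x : PiLp 2 (fun _ : Fin d => F), p.2 (T x) = T (p.2 x)) ∨
      (IsAntiunitaryMap p.1 ∧ IsAntiunitaryMap p.2 ∧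
        ∀ x : PiLp 2 (fun _ : Fin d => F),
          p.2 (T x) = (ContinuousLinearMap.adjoint T) (p.2 x)))
    (hvac : ∀ p ∈ 𝒮, ∀ v : EuclideanSpace ℂ (Fin d),
      p.2 (tensorVacuum d Ω v) = tensorVacuum d Ω (p.1 v))
    (hirr : ∀ W : Submodule ℂ (EuclideanSpace ℂ (Fin d)),
      (∀ p ∈ 𝒮, ∀ v ∈ W, p.1 v ∈ W) → W = ⊥ ∨ W = ⊤)
    (M : EuclideanSpace ℂ (Fin d) →L[ℂ] EuclideanSpace ℂ (Fin d))
    (hM : ∀ v₁ v₂ : EuclideanSpace ℂ (Fin d),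
      (inner ℂ v₁ (M v₂) : ℂ) = inner ℂ (tensorVacuum d Ω v₁) (T (tensorVacuum d Ω v₂))) :
    ∃ c : ℂ, M = c • ContinuousLinearMap.id ℂ (EuclideanSpace ℂ (Fin d)) :=
  vacuum_expectation_is_scalar_general Ω d T 𝒮 hsym hvac hirr M hM
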